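/- Let K_n be the complete graph on n vertices, n ≥ 2. Then for every function f on the vertices and every vertex x, Γ₂(f,f)(x) = (1/2)(Δf(x))² + ((4−n)/(2(n−1)))·Γ(f,f)(x) + (1/(n−1)²)·∑_{(x₁,x₂)}(f(x₁)−f(x₂))², where the last sum runs over all unordered pairs of distinct neighbors x₁,x₂ of x. -/
import Mathlib


open SimpleGraph Finset

variable {V : Type*}

/-- The probability measure attached to a vertex `x`: uniform on its neighbors. -/
noncomputable def nbrMeasure (G : SimpleGraph V) [G.LocallyFinite] [DecidableRel G.Adj]
    (x z : V) : ℝ :=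
  if G.Adj x z then ((G.degree x : ℝ))⁻¹ else 0

/-- A coupling (transfer plan) between the measures `m_x` and `m_y`. -/
def IsCoupling (G : SimpleGraph V) [G.LocallyFinite] [DecidableRel G.Adj]
    (x y : V) (ξ : V → V → ℝ) : Prop :=
  (∀ u v, 0 ≤ ξ u v) ∧
  (∀ u v, ξ u v ≠ 0 → G.Adj x u ∧ G.Adj y v) ∧
  (∀ u, ∑ v ∈ G.neighborFinset y, ξ u v = nbrMeasure G x u) ∧
  (∀ v, ∑ u ∈ G.neighborFinset x, ξ u v = nbrMeasure G y v)

/-- The transportation distance `W₁(m_x, m_y)`. -/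
noncomputable def W1 (G : SimpleGraph V) [G.LocallyFinite] [DecidableRel G.Adj]
    (x y : V) : ℝ :=
  sInf { c : ℝ | ∃ ξ : V → V → ℝ, IsCoupling G x y ξ ∧
    c = ∑ u ∈ G.neighborFinset x, ∑ v ∈ G.neighborFinset y, (G.dist u v : ℝ) * ξ u v }

/-- Ollivier's Ricci curvature `κ(x,y) = 1 - W₁(m_x,m_y)/d(x,y)`. -/
noncomputable def ricci (G : SimpleGraph V) [G.LocallyFinite] [DecidableRel G.Adj]
    (x y : V) : ℝ :=
  1 - W1 G x y / (G.dist x y : ℝ)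

/-- Positive part of a real number: `a₊ = max a 0`. -/
noncomputable def posPart' (a : ℝ) : ℝ := max a 0

/-- `♯(x,y)`: the number of common neighbors of `x` and `y`. -/
def triangles (G : SimpleGraph V) [G.LocallyFinite] [DecidableEq V] (x y : V) : ℕ :=
  (G.neighborFinset x ∩ G.neighborFinset y).card

/-- The graph Laplacian `Δf(x) = (1/d_x)∑_{y∼x} f(y) - f(x)`. -/
noncomputable def lap (G : SimpleGraph V) [G.LocallyFinite] (f : V → ℝ) (x : V) : ℝ :=
  (G.degree x : ℝ)⁻¹ * ∑ y ∈ G.neighborFinset x, f y - f x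

/-- The Bakry–Émery operator `Γ(f,g)(x) = (1/2)(Δ(fg) - fΔg - gΔf)(x)`. -/
noncomputable def gam (G : SimpleGraph V) [G.LocallyFinite] (f g : V → ℝ) (x : V) : ℝ :=
  (1 / 2) * (lap G (f * g) x - f x * lap G g x - g x * lap G f x)

/-- The Bakry–Émery operator `Γ₂(f,f)(x) = (1/2)(ΔΓ(f,f) - 2Γ(f,Δf))(x)`. -/
noncomputable def gam2 (G : SimpleGraph V) [G.LocallyFinite] (f : V → ℝ) (x : V) : ℝ :=
  (1 / 2) * (lap G (gam G f f) x - 2 * gam G f (lap G f) x)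

lemma nbr_top (n : ℕ) (x : Fin n) :
    (⊤ : SimpleGraph (Fin n)).neighborFinset x = Finset.univ.erase x := by
  ext y; simp [SimpleGraph.mem_neighborFinset, ne_comm, eq_comm]

lemma lap_top (n : ℕ) (hn : 2 ≤ n) (g : Fin n → ℝ) (z : Fin n) :
    lap (⊤ : SimpleGraph (Fin n)) g z = ((n:ℝ)-1)⁻¹ * ((∑ y, g y) - g z) - g z := by
  have hcard : ((((⊤ : SimpleGraph (Fin n)).degree z : ℕ)) : ℝ) = (n:ℝ) - 1 := by
    rw [SimpleGraph.complete_graph_degree]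
    rw [Nat.cast_sub (by simpa using by omega : 1 ≤ Fintype.card (Fin n))]
    simp
  rw [lap, hcard, nbr_top, Finset.sum_erase_eq_sub (Finset.mem_univ z)]

lemma gam_top (n : ℕ) (hn : 2 ≤ n) (f : Fin n → ℝ) (z : Fin n) :
    gam (⊤ : SimpleGraph (Fin n)) f f z =
      (2*((n:ℝ)-1))⁻¹ * ((∑ y, f y ^ 2) - 2 * f z * (∑ y, f y) + (n:ℝ) * f z ^ 2) := by
  have hd : (n:ℝ) - 1 ≠ 0 := by
    have : (2:ℝ) ≤ n := by exact_mod_cast hn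
    linarith
  rw [gam, lap_top n hn, lap_top n hn]
  have h1 : ∑ y, (f * f) y = ∑ y, f y ^ 2 := by
    apply Finset.sum_congr rfl; intro y _; simp [sq]
  have h2 : (f * f) z = f z ^ 2 := by simp [sq]
  rw [h1, h2]
  field_simp
  ring

lemma sum_sq_pairs {α : Type*} (s : Finset α) (g : α → ℝ) :
    ∑ u ∈ s, ∑ v ∈ s, (g u - g v)^2 =
      2 * s.card * (∑ u ∈ s, g u ^ 2) - 2 * (∑ u ∈ s, g u)^2 := by
  have key : ∀ u ∈ s, ∑ v ∈ s, (g u - g v)^2 =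
      (s.card : ℝ) * g u ^ 2 - 2 * g u * (∑ v ∈ s, g v) + ∑ v ∈ s, g v ^ 2 := by
    intro u _
    have h : ∀ v ∈ s, (g u - g v)^2 = g u ^ 2 - 2 * g u * g v + g v ^ 2 := by
      intro v _; ring
    rw [Finset.sum_congr rfl h, Finset.sum_add_distrib, Finset.sum_sub_distrib,
      Finset.sum_const, ← Finset.mul_sum, nsmul_eq_mul]
  rw [Finset.sum_congr rfl key, Finset.sum_add_distrib, Finset.sum_sub_distrib,
    Finset.sum_const, nsmul_eq_mul, ← Finset.mul_sum, ← Finset.sum_mul, ← Finset.mul_sum]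
  ring

/-- On the complete graph `K_n` (`n ≥ 2`),
`Γ₂(f,f)(x) = (1/2)(Δf(x))² + ((4-n)/(2(n-1)))·Γ(f,f)(x)
  + (1/(n-1)²)·∑_{(x₁,x₂)}(f(x₁)-f(x₂))²`,
where the last sum runs over all unordered pairs of distinct neighbors of `x`
(formalized as half the corresponding sum over ordered pairs). -/
theorem gamma2_complete_graph (n : ℕ) (hn : 2 ≤ n) (f : Fin n → ℝ) (x : Fin n) :
    gam2 (⊤ : SimpleGraph (Fin n)) f x =
      (1 / 2) * (lap (⊤ : SimpleGraph (Fin n)) f x) ^ 2 +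
        ((4 - (n : ℝ)) / (2 * ((n : ℝ) - 1))) * gam (⊤ : SimpleGraph (Fin n)) f f x +
        (1 / ((n : ℝ) - 1) ^ 2) *
          ((1 / 2) * ∑ x₁ ∈ (⊤ : SimpleGraph (Fin n)).neighborFinset x,
            ∑ x₂ ∈ (⊤ : SimpleGraph (Fin n)).neighborFinset x, (f x₁ - f x₂) ^ 2) := by
  have hn' : (2:ℝ) ≤ n := by exact_mod_cast hn
  have hd : (n:ℝ) - 1 ≠ 0 := by linarith
  set d : ℝ := (n:ℝ) - 1 with hdef
  set T : ℝ := ∑ y, f y with hT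
  set Q : ℝ := ∑ y, f y ^ 2 with hQ
  -- sum of gam over all vertices
  have hsum_gam : ∑ y, gam (⊤ : SimpleGraph (Fin n)) f f y
      = (2*d)⁻¹ * (2 * (n:ℝ) * Q - 2 * T^2) := by
    rw [Finset.sum_congr rfl (fun y _ => gam_top n hn f y)]
    rw [← Finset.mul_sum]
    congr 1
    rw [Finset.sum_add_distrib, Finset.sum_sub_distrib, Finset.sum_const,
      nsmul_eq_mul, ← Finset.sum_mul, ← Finset.mul_sum, ← Finset.mul_sum]
    simp only [Finset.card_univ, Fintype.card_fin, ← hT, ← hQ]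
    ring
  -- sum of lap f over all vertices
  have hlapf : ∀ z, lap (⊤ : SimpleGraph (Fin n)) f z = d⁻¹ * (T - f z) - f z := by
    intro z; rw [lap_top n hn, ← hT, ← hdef]
  have hsum_lap : ∑ y, lap (⊤ : SimpleGraph (Fin n)) f y = 0 := by
    rw [Finset.sum_congr rfl (fun y _ => hlapf y), Finset.sum_sub_distrib,
      ← Finset.mul_sum, Finset.sum_sub_distrib, Finset.sum_const, nsmul_eq_mul]
    simp only [Finset.card_univ, Fintype.card_fin, ← hT]
    field_simp
    ring
  -- sum of f * lap f over all vertices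
  have hsum_flap : ∑ y, (f * lap (⊤ : SimpleGraph (Fin n)) f) y
      = d⁻¹ * (T^2 - Q) - Q := by
    have h : ∀ y ∈ (Finset.univ : Finset (Fin n)), (f * lap (⊤ : SimpleGraph (Fin n)) f) y
        = d⁻¹ * (T * f y) - d⁻¹ * f y ^ 2 - f y ^ 2 := by
      intro y _; rw [Pi.mul_apply, hlapf y]; ring
    rw [Finset.sum_congr rfl h, Finset.sum_sub_distrib, Finset.sum_sub_distrib,
      ← Finset.mul_sum, ← Finset.mul_sum, ← Finset.mul_sum]
    rw [← hQ]
    ring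
  -- the double sum on the right
  have hdouble : ∑ x₁ ∈ (⊤ : SimpleGraph (Fin n)).neighborFinset x,
      ∑ x₂ ∈ (⊤ : SimpleGraph (Fin n)).neighborFinset x, (f x₁ - f x₂) ^ 2
      = 2 * d * (Q - f x ^ 2) - 2 * (T - f x)^2 := by
    rw [nbr_top, sum_sq_pairs]
    rw [Finset.sum_erase_eq_sub (Finset.mem_univ x), Finset.sum_erase_eq_sub (Finset.mem_univ x)]
    rw [Finset.card_erase_of_mem (Finset.mem_univ x), Finset.card_univ, Fintype.card_fin]
    rw [← hT, ← hQ]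
    have : ((n - 1 : ℕ) : ℝ) = d := by
      rw [Nat.cast_sub (by omega)]; simp [hdef]
    rw [this]
  -- now unfold gam2
  rw [gam2, lap_top n hn, hsum_gam, gam_top n hn]
  rw [show gam (⊤ : SimpleGraph (Fin n)) f (lap (⊤ : SimpleGraph (Fin n)) f) x
      = (1 / 2) * (lap (⊤ : SimpleGraph (Fin n)) (f * lap (⊤ : SimpleGraph (Fin n)) f) x
        - f x * lap (⊤ : SimpleGraph (Fin n)) (lap (⊤ : SimpleGraph (Fin n)) f) x
        - lap (⊤ : SimpleGraph (Fin n)) f x * lap (⊤ : SimpleGraph (Fin n)) f x) from rfl]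
  rw [lap_top n hn (f * lap (⊤ : SimpleGraph (Fin n)) f), hsum_flap,
    lap_top n hn (lap (⊤ : SimpleGraph (Fin n)) f), hsum_lap]
  rw [Pi.mul_apply]
  rw [hlapf x, hdouble, ← hT, ← hQ, ← hdef]
  field_simp
  ring
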